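/- Let Π be a probability measure on ℝ and let g₂(p) = ∫_ℝ (1/2)[exp(h·cv₂(p) − h²/2) + exp(−h·cv₂(p) − h²/2)] dΠ(h). Then for every p ∈ (0,1), g₂(p) ≤ exp(cv₂(p)²/2), and for every p ∈ (0,1) with p ≥ 2(1 − Φ(1)), g₂(p) ≤ 1. -/
import Mathlib

open MeasureTheory

/-- The standard normal density φ(x) = (2π)^{-1/2} exp(-x²/2). -/
noncomputable def stdNormalPdf (x : ℝ) : ℝ :=
  (Real.sqrt (2 * Real.pi))⁻¹ * Real.exp (-x ^ 2 / 2)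

/-- The standard normal CDF Φ(x) = ∫_{-∞}^x φ(t) dt. -/
noncomputable def stdNormalCdf (x : ℝ) : ℝ :=
  ∫ t in Set.Iic x, stdNormalPdf t

lemma stdNormalPdf_integrable : MeasureTheory.Integrable stdNormalPdf := by
  have : stdNormalPdf = fun x => (Real.sqrt (2 * Real.pi))⁻¹ * Real.exp (-(1/2) * x ^ 2) := by
    funext x; simp only [stdNormalPdf]; congr 1; ring
  rw [this]
  exact (integrable_exp_neg_mul_sq (by norm_num)).const_mul _

set_option maxHeartbeats 1000000 in
lemma stdNormalCdf_strictMono : StrictMono stdNormalCdf := by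
  intro a b hab
  have hInt : ∀ c : ℝ, MeasureTheory.IntegrableOn stdNormalPdf (Set.Iic c) :=
    fun c => stdNormalPdf_integrable.integrableOn
  have h1 : (∫ x in Set.Iic b, stdNormalPdf x) - (∫ x in Set.Iic a, stdNormalPdf x)
      = ∫ x in a..b, stdNormalPdf x :=
    intervalIntegral.integral_Iic_sub_Iic (hInt a) (hInt b)
  have h2 : 0 < ∫ x in a..b, stdNormalPdf x := by
    apply intervalIntegral.intervalIntegral_pos_of_pos_on
    · exact stdNormalPdf_integrable.intervalIntegrable
    · intro x _
      have : 0 < Real.sqrt (2 * Real.pi) := Real.sqrt_pos.2 (by positivity)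
      exact mul_pos (inv_pos.2 this) (Real.exp_pos _)
    · exact hab
  simp only [stdNormalCdf]
  linarith

lemma stdNormalCdf_zero : stdNormalCdf 0 = 1 / 2 := by
  have hint := stdNormalPdf_integrable
  have heven : ∀ x : ℝ, stdNormalPdf (-x) = stdNormalPdf x := by
    intro x; simp [stdNormalPdf, neg_pow]
  have hsym : (∫ x in Set.Iic (0:ℝ), stdNormalPdf x) = ∫ x in Set.Ioi (0:ℝ), stdNormalPdf x := by
    have h := integral_comp_neg_Iic (0:ℝ) stdNormalPdf
    simp only [heven, neg_zero] at h
    exact h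
  have htot : (∫ x, stdNormalPdf x) = 1 := by
    have : (∫ x, stdNormalPdf x) =
        (Real.sqrt (2 * Real.pi))⁻¹ * ∫ x : ℝ, Real.exp (-(1/2) * x ^ 2) := by
      rw [← MeasureTheory.integral_const_mul]
      congr 1; funext x; simp only [stdNormalPdf]; congr 1; ring
    rw [this, integral_gaussian]
    rw [show Real.pi / (1/2) = 2 * Real.pi by ring]
    rw [inv_mul_cancel₀]
    exact Real.sqrt_ne_zero'.2 (by positivity)
  have hsplit : (∫ x in Set.Iic (0:ℝ), stdNormalPdf x) +
      (∫ x in Set.Ioi (0:ℝ), stdNormalPdf x) = ∫ x, stdNormalPdf x := by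
    rw [← MeasureTheory.setIntegral_union (Set.Iic_disjoint_Ioi le_rfl) measurableSet_Ioi
      hint.integrableOn hint.integrableOn, Set.Iic_union_Ioi,
      MeasureTheory.Measure.restrict_univ]
  unfold stdNormalCdf
  rw [htot] at hsplit
  linarith [hsym]

/-- if Π is a probability measure on ℝ, cv₂(p) = Φ⁻¹(1−p/2) on (0,1), and
g₂(p) = ∫ (1/2)[exp(h·cv₂(p) − h²/2) + exp(−h·cv₂(p) − h²/2)] dΠ(h), then for every
p ∈ (0,1), g₂(p) ≤ exp(cv₂(p)²/2), and for every p ∈ (0,1) with p ≥ 2(1 − Φ(1)),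
g₂(p) ≤ 1. -/
theorem stmt_8
    (Pi : Measure ℝ) [IsProbabilityMeasure Pi]
    (cv : ℝ → ℝ) (hcv : ∀ p ∈ Set.Ioo (0 : ℝ) 1, stdNormalCdf (cv p) = 1 - p / 2)
    (g₂ : ℝ → ℝ)
    (hg₂ : ∀ p : ℝ, g₂ p =
      ∫ h, (1 / 2) * (Real.exp (h * cv p - h ^ 2 / 2) +
        Real.exp (-(h * cv p) - h ^ 2 / 2)) ∂Pi) :
    (∀ p ∈ Set.Ioo (0 : ℝ) 1, g₂ p ≤ Real.exp (cv p ^ 2 / 2)) ∧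
    (∀ p ∈ Set.Ioo (0 : ℝ) 1, 2 * (1 - stdNormalCdf 1) ≤ p → g₂ p ≤ 1) := by
  -- generic bound lemma: if integrand ≤ C pointwise (with C ≥ 0) then g₂ p ≤ C
  have key : ∀ (c C : ℝ), 0 < C →
      (∀ h : ℝ, (1 / 2) * (Real.exp (h * c - h ^ 2 / 2) +
        Real.exp (-(h * c) - h ^ 2 / 2)) ≤ C) →
      (∫ h, (1 / 2) * (Real.exp (h * c - h ^ 2 / 2) +
        Real.exp (-(h * c) - h ^ 2 / 2)) ∂Pi) ≤ C := by
    intro c C hC hbd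
    set f : ℝ → ℝ := fun h => (1 / 2) * (Real.exp (h * c - h ^ 2 / 2) +
        Real.exp (-(h * c) - h ^ 2 / 2)) with hf
    have hfpos : ∀ h, 0 ≤ f h := by
      intro h; positivity
    have hcont : Continuous f := by
      apply Continuous.mul continuous_const
      exact ((Real.continuous_exp.comp (by fun_prop)).add
        (Real.continuous_exp.comp (by fun_prop)))
    have hint : MeasureTheory.Integrable f Pi := by
      refine MeasureTheory.Integrable.mono' (integrable_const C)
        hcont.aestronglyMeasurable ?_
      filter_upwards with h
      rw [Real.norm_eq_abs, abs_of_nonneg (hfpos h)]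
      exact hbd h
    calc ∫ h, f h ∂Pi ≤ ∫ _, C ∂Pi := by
          exact integral_mono hint (integrable_const C) hbd
      _ = C := by simp
  constructor
  · intro p hp
    rw [hg₂ p]
    refine key (cv p) _ (Real.exp_pos _) ?_
    intro h
    have h1 : Real.exp (h * cv p - h ^ 2 / 2) ≤ Real.exp (cv p ^ 2 / 2) := by
      apply Real.exp_le_exp.2; nlinarith [sq_nonneg (h - cv p)]
    have h2 : Real.exp (-(h * cv p) - h ^ 2 / 2) ≤ Real.exp (cv p ^ 2 / 2) := by
      apply Real.exp_le_exp.2; nlinarith [sq_nonneg (h + cv p)]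
    linarith
  · intro p hp hple
    -- cv p ≤ 1
    have hcvp := hcv p hp
    have hcv1 : cv p ≤ 1 := by
      by_contra hgt
      push_neg at hgt
      have := stdNormalCdf_strictMono hgt
      rw [hcvp] at this
      linarith
    have hcv0 : 0 ≤ cv p := by
      by_contra hlt
      push_neg at hlt
      have h2 : stdNormalCdf (cv p) < stdNormalCdf 0 := stdNormalCdf_strictMono hlt
      rw [hcvp, stdNormalCdf_zero] at h2
      linarith [hp.2]
    have hsq : cv p ^ 2 ≤ 1 := by nlinarith
    rw [hg₂ p]
    refine key (cv p) 1 one_pos ?_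
    intro h
    have hcosh : (1 / 2) * (Real.exp (h * cv p) + Real.exp (-(h * cv p))) ≤
        Real.exp ((h * cv p) ^ 2 / 2) := by
      have := Real.cosh_le_exp_half_sq (h * cv p)
      rw [Real.cosh_eq] at this
      linarith
    have hexp : Real.exp ((h * cv p) ^ 2 / 2) * Real.exp (- (h ^ 2 / 2)) ≤ 1 := by
      rw [← Real.exp_add, ← Real.exp_zero]
      apply Real.exp_le_exp.2
      nlinarith [sq_nonneg h]
    calc (1 / 2) * (Real.exp (h * cv p - h ^ 2 / 2) + Real.exp (-(h * cv p) - h ^ 2 / 2))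
        = ((1 / 2) * (Real.exp (h * cv p) + Real.exp (-(h * cv p)))) * Real.exp (-(h ^ 2 / 2)) := by
          rw [sub_eq_add_neg, sub_eq_add_neg, Real.exp_add, Real.exp_add]; ring
      _ ≤ Real.exp ((h * cv p) ^ 2 / 2) * Real.exp (-(h ^ 2 / 2)) := by
          have := Real.exp_pos (-(h ^ 2 / 2))
          exact mul_le_mul_of_nonneg_right hcosh (le_of_lt this)
      _ ≤ 1 := hexp
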